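/- Set g₀ := −f and assume (†): for each i = 1,…,n exactly one of the coefficients (g₀)_{d,i}, (g₁)_{d,i}, …, (g_m)_{d,i} is strictly negative. Let A := I, the identity matrix of size m+1 (so h_k = g_k for k = 0,…,m). If, in addition, Δ(−g_j) ∩ Δ(−g_k) = ∅ for all 0 ≤ j < k ≤ m and g_k(0) ≥ 0 for k = 1,…,m, then f^I_{gp,g} = s₀(f,g) := sup{G(λ)_gp : λ ∈ (0,∞)^m} (as elements of ℝ ∪ {±∞}). -/

import Mathlib

open MvPolynomial Finset

noncomputable section

/-- `Finset.filter` with classical decidability. -/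
def pfilter {β : Type*} (s : Finset β) (q : β → Prop) : Finset β :=
  @Finset.filter β q (fun _ => Classical.propDecidable _) s

/-- `|α| := α₁ + ⋯ + αₙ` for a multi-index `α`. -/
def adeg {n : ℕ} (α : Fin n →₀ ℕ) : ℕ := ∑ i, α i

/-- `Ω(p) := {α : |α| ≤ d, p_α ≠ 0, α ∉ {0, ε₁, …, εₙ}}`. -/
def OmegaSet {n : ℕ} (d : ℕ) (p : MvPolynomial (Fin n) ℝ) : Finset (Fin n →₀ ℕ) :=
  pfilter p.support (fun α => adeg α ≤ d ∧ α ≠ 0 ∧ ∀ i, α ≠ Finsupp.single i d)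

/-- `Δ(p) := {α ∈ Ω(p) : p_α x^α is not a square}`. -/
def DelSet {n : ℕ} (d : ℕ) (p : MvPolynomial (Fin n) ℝ) : Finset (Fin n →₀ ℕ) :=
  pfilter (OmegaSet d p)
    (fun α => ¬ IsSquare ((monomial α (p.coeff α)) : MvPolynomial (Fin n) ℝ))

/-- Feasibility for program (lw) for `p`. -/
def LwFeas {n : ℕ} (d : ℕ) (p : MvPolynomial (Fin n) ℝ)
    (z : (Fin n →₀ ℕ) → Fin n → ℝ) : Prop :=
  (∀ α ∈ DelSet d p, ∀ i, 0 ≤ z α i ∧ (z α i = 0 ↔ α i = 0)) ∧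
  (∀ i, ∑ α ∈ DelSet d p, z α i ≤ p.coeff (Finsupp.single i d)) ∧
  (∀ α ∈ DelSet d p, adeg α = d →
    ∏ i, (z α i / (α i : ℝ)) ^ (α i) = (p.coeff α / (d : ℝ)) ^ d)

/-- The objective function `v` of program (lw). -/
def lwObj {n : ℕ} (d : ℕ) (p : MvPolynomial (Fin n) ℝ)
    (z : (Fin n →₀ ℕ) → Fin n → ℝ) : ℝ :=
  ∑ α ∈ pfilter (DelSet d p) (fun α => adeg α < d),
    ((d : ℝ) - (adeg α : ℝ)) *
      (((p.coeff α / (d : ℝ)) ^ d * ∏ i, ((α i : ℝ) / z α i) ^ (α i)) ^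
        ((1 : ℝ) / ((d : ℝ) - (adeg α : ℝ))))

/-- `ρ(p) ∈ [0,∞]`, the infimum of `v` over the feasible set (`⊤` if infeasible). -/
def lwRho {n : ℕ} (d : ℕ) (p : MvPolynomial (Fin n) ℝ) : EReal :=
  sInf ((fun z => ((lwObj d p z : ℝ) : EReal)) '' {z | LwFeas d p z})

/-- `p_gp := p(0) − ρ(p) ∈ ℝ ∪ {−∞}`. -/
def lwGp {n : ℕ} (d : ℕ) (p : MvPolynomial (Fin n) ℝ) : EReal :=
  ((eval (0 : Fin n → ℝ) p : ℝ) : EReal) - lwRho d p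

/-- `G(λ) := f − ∑ⱼ λⱼ gⱼ`. -/
def polyG {n m : ℕ} (f : MvPolynomial (Fin n) ℝ) (g : Fin m → MvPolynomial (Fin n) ℝ)
    (lam : Fin m → ℝ) : MvPolynomial (Fin n) ℝ :=
  f - ∑ j, C (lam j) * g j

/-- `s(f,g) := sup{G(λ)_gp : λ ∈ [0,∞)^m}`. -/
def sBound {n m : ℕ} (d : ℕ) (f : MvPolynomial (Fin n) ℝ)
    (g : Fin m → MvPolynomial (Fin n) ℝ) : EReal :=
  sSup ((fun lam => lwGp d (polyG f g lam)) '' {lam : Fin m → ℝ | ∀ j, 0 ≤ lam j})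


/-- `h_k := ∑_{j=0}^m a_{jk} g_j` for `gext = (g₀, g₁, …, g_m)` with `g₀ = −f`. -/
def hpoly {n m : ℕ} (gext : Fin (m+1) → MvPolynomial (Fin n) ℝ)
    (A : Fin (m+1) → Fin (m+1) → ℝ) (k : Fin (m+1)) : MvPolynomial (Fin n) ℝ :=
  ∑ j, C (A j k) * gext j

/-- `μ` extended by `μ₀ := 1`. -/
def muExt {m : ℕ} (mu : Fin m → ℝ) : Fin (m+1) → ℝ := Fin.cons 1 mu

/-- `H(μ) := −∑_{k=0}^m μ_k h_k`. -/
def Hpoly {n m : ℕ} (gext : Fin (m+1) → MvPolynomial (Fin n) ℝ)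
    (A : Fin (m+1) → Fin (m+1) → ℝ) (mu : Fin m → ℝ) : MvPolynomial (Fin n) ℝ :=
  - ∑ k, C (muExt mu k) * hpoly gext A k

/-- `H(μ)_α^+ := −∑_{j : (h_j)_α < 0} (h_j)_α μ_j`. -/
def Hplus {n m : ℕ} (gext : Fin (m+1) → MvPolynomial (Fin n) ℝ)
    (A : Fin (m+1) → Fin (m+1) → ℝ) (mu : Fin m → ℝ) (α : Fin n →₀ ℕ) : ℝ :=
  ∑ j, if (hpoly gext A j).coeff α < 0 then -((hpoly gext A j).coeff α * muExt mu j) else 0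

/-- `H(μ)_α^− := ∑_{j : (h_j)_α > 0} (h_j)_α μ_j`. -/
def Hminus {n m : ℕ} (gext : Fin (m+1) → MvPolynomial (Fin n) ℝ)
    (A : Fin (m+1) → Fin (m+1) → ℝ) (mu : Fin m → ℝ) (α : Fin n →₀ ℕ) : ℝ :=
  ∑ j, if 0 < (hpoly gext A j).coeff α then (hpoly gext A j).coeff α * muExt mu j else 0

/-- `Δ := Δ(f) ∪ Δ(−g₁) ∪ ⋯ ∪ Δ(−g_m)` (note `−g₀ = f`). -/
def DelTot2 {n m : ℕ} (d : ℕ) (gext : Fin (m+1) → MvPolynomial (Fin n) ℝ) :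
    Finset (Fin n →₀ ℕ) :=
  Finset.univ.biUnion (fun j : Fin (m+1) => DelSet d (-(gext j)))

/-- Feasibility for program (lw2). -/
def Lw2Feas {n m : ℕ} (d : ℕ) (gext : Fin (m+1) → MvPolynomial (Fin n) ℝ)
    (A : Fin (m+1) → Fin (m+1) → ℝ)
    (z : (Fin n →₀ ℕ) → Fin n → ℝ) (w : (Fin n →₀ ℕ) → ℝ) (mu : Fin m → ℝ) : Prop :=
  (∀ j, 0 < mu j) ∧
  (∀ α ∈ DelTot2 d gext, ∀ i, 0 ≤ z α i ∧ (z α i = 0 ↔ α i = 0)) ∧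
  (∀ α ∈ DelTot2 d gext, 0 < w α) ∧
  (∀ i, ∑ α ∈ DelTot2 d gext, z α i ≤ (Hpoly gext A mu).coeff (Finsupp.single i d)) ∧
  (∀ α ∈ DelTot2 d gext, adeg α = d →
    (w α / (d : ℝ)) ^ d ≤ ∏ i, (z α i / (α i : ℝ)) ^ (α i)) ∧
  (∀ α ∈ DelTot2 d gext, max (Hplus gext A mu α) (Hminus gext A mu α) ≤ w α) ∧
  (∀ j : Fin (m+1), j ≠ 0 → 0 ≤ ∑ k, A j k * muExt mu k)

/-- The objective function `t` of program (lw2). -/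
def lw2Obj {n m : ℕ} (d : ℕ) (gext : Fin (m+1) → MvPolynomial (Fin n) ℝ)
    (A : Fin (m+1) → Fin (m+1) → ℝ)
    (z : (Fin n →₀ ℕ) → Fin n → ℝ) (w : (Fin n →₀ ℕ) → ℝ) (mu : Fin m → ℝ) : ℝ :=
  (∑ j : Fin m, mu j * max (eval (0 : Fin n → ℝ) (hpoly gext A j.succ)) 0) +
  ∑ α ∈ pfilter (DelTot2 d gext) (fun α => adeg α < d),
    ((d : ℝ) - (adeg α : ℝ)) *
      (((w α / (d : ℝ)) ^ d * ∏ i, ((α i : ℝ) / z α i) ^ (α i)) ^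
        ((1 : ℝ) / ((d : ℝ) - (adeg α : ℝ))))

/-- `ρ_A ∈ [0,∞]`, the optimal value of program (lw2) (`⊤` if infeasible). -/
def rhoA {n m : ℕ} (d : ℕ) (gext : Fin (m+1) → MvPolynomial (Fin n) ℝ)
    (A : Fin (m+1) → Fin (m+1) → ℝ) : EReal :=
  sInf ((fun t : ((Fin n →₀ ℕ) → Fin n → ℝ) × ((Fin n →₀ ℕ) → ℝ) × (Fin m → ℝ) =>
      ((lw2Obj d gext A t.1 t.2.1 t.2.2 : ℝ) : EReal)) ''
    {t | Lw2Feas d gext A t.1 t.2.1 t.2.2})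

/-- `f^A_{gp,g} := −h₀(0) − ρ_A ∈ ℝ ∪ {−∞}`. -/
def fAgp {n m : ℕ} (d : ℕ) (gext : Fin (m+1) → MvPolynomial (Fin n) ℝ)
    (A : Fin (m+1) → Fin (m+1) → ℝ) : EReal :=
  ((-(eval (0 : Fin n → ℝ) (hpoly gext A 0)) : ℝ) : EReal) - rhoA d gext A

/-!
With `A = I` one has `h_k = g_k` and `H(μ) = G(μ)`. Since `Ω(-g_k) = Δ(-g_k)` and these sets are
pairwise disjoint, each `α ∈ Δ` is a monomial of exactly one `g_k`, so `G(μ)_α = μ_k (-g_k)_α`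
for `μ > 0`; hence `Δ(G(μ)) = Δ` and `max (H(μ)_α^+) (H(μ)_α^-) = |G(μ)_α|`. A feasible `z` of
(lw) for `G(μ)` thus gives the feasible point `(z, |G(μ)_α|, μ)` of (lw2), of cost
`∑ μ_j g_j(0) + v(z)` because `g_j(0) ≥ 0`. Conversely a feasible point of (lw2) yields one of
(lw) for `G(μ)` of no larger cost: `w_α ≥ |G(μ)_α|`, and the constraints at `|α| = d` are made
equalities by shrinking `z_α`, which does not enter the objective. Taking suprema over `μ`
gives `f^I_{gp,g} = s₀(f,g)`.
-/

lemma mem_pfilter {β : Type*} {s : Finset β} {q : β → Prop} {a : β} :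
    a ∈ pfilter s q ↔ a ∈ s ∧ q a :=
  @Finset.mem_filter β q (fun _ => Classical.propDecidable _) s a

namespace EReal

lemma coe_sub_sInf_image_le {ι : Type*} {c : ℝ} {L : EReal} {F : ι → ℝ} {S : Set ι}
    (h : ∀ x ∈ S, ((c - F x : ℝ) : EReal) ≤ L) :
    (c : EReal) - sInf ((fun x => (F x : EReal)) '' S) ≤ L := by
  induction L using EReal.rec with
  | bot =>
    have hS : S = ∅ := Set.eq_empty_of_forall_notMem fun x hx =>
      EReal.coe_ne_bot _ (le_bot_iff.1 (h x hx))
    simp [hS]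
  | coe l =>
    have hlow : ((c - l : ℝ) : EReal) ≤ sInf ((fun x => (F x : EReal)) '' S) := by
      refine le_sInf ?_
      rintro _ ⟨x, hx, rfl⟩
      have := EReal.coe_le_coe_iff.mp (h x hx)
      exact EReal.coe_le_coe_iff.mpr (by linarith)
    calc (c : EReal) - sInf ((fun x => (F x : EReal)) '' S)
        ≤ (c : EReal) - ((c - l : ℝ) : EReal) := EReal.sub_le_sub le_rfl hlow
      _ = l := by rw [← EReal.coe_sub, sub_sub_cancel]
  | top => exact le_top

lemma coe_sub_le_coe_sub_sInf {c y : ℝ} {S : Set EReal} (hy : (y : EReal) ∈ S) :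
    ((c - y : ℝ) : EReal) ≤ (c : EReal) - sInf S := by
  rw [EReal.coe_sub]
  exact EReal.sub_le_sub le_rfl (sInf_le hy)

end EReal

lemma div_pow_le_div_pow_of_abs_le {k : ℕ} (hk : Even k) {a b c : ℝ} (hc : 0 ≤ c)
    (h : |a| ≤ b) : (a / c) ^ k ≤ (b / c) ^ k := by
  rw [← hk.pow_abs, abs_div, abs_of_nonneg hc]
  exact pow_le_pow_left₀ (by positivity) (div_le_div_of_nonneg_right h hc) k

lemma exists_pos_le_one_pow_mul_eq {k : ℕ} (hk : k ≠ 0) {c P : ℝ} (hc : 0 < c) (hcP : c ≤ P) :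
    ∃ θ : ℝ, 0 < θ ∧ θ ≤ 1 ∧ θ ^ k * P = c := by
  have hP := hc.trans_le hcP
  refine ⟨(c / P) ^ (k⁻¹ : ℝ), by positivity,
    Real.rpow_le_one (by positivity) ((div_le_one hP).2 hcP) (by positivity), ?_⟩
  rw [Real.rpow_inv_natCast_pow (by positivity) hk, div_mul_cancel₀ _ hP.ne']

lemma MvPolynomial.isSquare_C_mul_iff {σ : Type*} {t : ℝ} (ht : 0 < t) {q : MvPolynomial σ ℝ} :
    IsSquare (C t * q) ↔ IsSquare q := by
  have hsq : ∀ {s : ℝ}, 0 ≤ s → IsSquare (C s : MvPolynomial σ ℝ) := fun {s} hs =>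
    ⟨C √s, by rw [← C_mul, Real.mul_self_sqrt hs]⟩
  refine ⟨fun h => ?_, (hsq ht.le).mul⟩
  simpa [← mul_assoc, ← C_mul, inv_mul_cancel₀ ht.ne'] using (hsq (inv_nonneg.2 ht.le)).mul h

section DelSet

variable {n d : ℕ} {p q : MvPolynomial (Fin n) ℝ} {α : Fin n →₀ ℕ}

lemma mem_OmegaSet :
    α ∈ OmegaSet d p ↔ p.coeff α ≠ 0 ∧ adeg α ≤ d ∧ α ≠ 0 ∧ ∀ i, α ≠ Finsupp.single i d := by
  rw [OmegaSet, mem_pfilter, mem_support_iff]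

lemma mem_OmegaSet_of_coeff_ne_zero (hα : α ∈ OmegaSet d p) (hq : q.coeff α ≠ 0) :
    α ∈ OmegaSet d q :=
  mem_OmegaSet.2 ⟨hq, (mem_OmegaSet.1 hα).2⟩

lemma mem_DelSet :
    α ∈ DelSet d p ↔ α ∈ OmegaSet d p ∧ ¬ IsSquare (monomial α (p.coeff α)) :=
  mem_pfilter

lemma coeff_ne_zero_of_mem_DelSet (hα : α ∈ DelSet d p) : p.coeff α ≠ 0 :=
  (mem_OmegaSet.1 (mem_DelSet.1 hα).1).1

end DelSet

lemma muExt_pos {m : ℕ} {μ : Fin m → ℝ} (hμ : ∀ j, 0 < μ j) (k : Fin (m+1)) : 0 < muExt μ k :=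
  Fin.cases (by simp [muExt]) (by simpa [muExt] using hμ) k

/- `A = I` is written `(1 : Matrix _ _ ℝ)`: a bare `1` of type `Fin (m+1) → Fin (m+1) → ℝ` would be
the all-ones matrix. -/
section IdentityMatrix

variable {n m d : ℕ} (gext : Fin (m+1) → MvPolynomial (Fin n) ℝ) (μ : Fin m → ℝ)

@[simp]
lemma hpoly_one (k : Fin (m+1)) : hpoly gext (1 : Matrix _ _ ℝ) k = gext k := by
  simp [hpoly, Matrix.one_apply]

lemma coeff_Hpoly_one (α : Fin n →₀ ℕ) :
    (Hpoly gext (1 : Matrix _ _ ℝ) μ).coeff α = ∑ k, muExt μ k * (-gext k).coeff α := by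
  simp [Hpoly, coeff_sum]

lemma Hpoly_one_cons_neg (f : MvPolynomial (Fin n) ℝ) (g : Fin m → MvPolynomial (Fin n) ℝ) :
    Hpoly (Fin.cons (-f) g) (1 : Matrix _ _ ℝ) μ = polyG f g μ := by
  simp [Hpoly, polyG, Fin.sum_univ_succ, muExt, sub_eq_add_neg, add_comm]

lemma eval_zero_Hpoly_one
    (hg0 : ∀ k : Fin (m+1), k ≠ 0 → 0 ≤ eval (0 : Fin n → ℝ) (gext k)) :
    eval 0 (Hpoly gext (1 : Matrix _ _ ℝ) μ) = -eval 0 (hpoly gext (1 : Matrix _ _ ℝ) 0) -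
      ∑ j, μ j * max (eval 0 (hpoly gext (1 : Matrix _ _ ℝ) j.succ)) 0 := by
  simp only [hpoly_one, fun j : Fin m => max_eq_left (hg0 j.succ j.succ_ne_zero)]
  simp [Hpoly, Fin.sum_univ_succ, muExt]
  ring

end IdentityMatrix

section DisjointSupports

variable {n m d : ℕ} {gext : Fin (m+1) → MvPolynomial (Fin n) ℝ} {μ : Fin m → ℝ}
  {α : Fin n →₀ ℕ}

def DisjointDelSets (d : ℕ) (gext : Fin (m+1) → MvPolynomial (Fin n) ℝ) : Prop :=
  (∀ j, OmegaSet d (-(gext j)) = DelSet d (-(gext j))) ∧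
    ∀ j k, j < k → DelSet d (-(gext j)) ∩ DelSet d (-(gext k)) = ∅

lemma coeff_eq_zero_of_mem_DelSet (hsep : DisjointDelSets d gext) {j₀ j : Fin (m+1)}
    (hα : α ∈ DelSet d (-(gext j₀))) (hj : j ≠ j₀) : (gext j).coeff α = 0 := by
  by_contra hne
  have hαj : α ∈ DelSet d (-(gext j)) := by
    rw [← hsep.1]
    exact mem_OmegaSet_of_coeff_ne_zero (mem_DelSet.1 hα).1 (by simpa using hne)
  rcases hj.lt_or_gt with h | h
  · simpa [hsep.2 j j₀ h] using mem_inter.2 ⟨hαj, hα⟩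
  · simpa [hsep.2 j₀ j h] using mem_inter.2 ⟨hα, hαj⟩

lemma coeff_Hpoly_one_of_mem_DelSet (hsep : DisjointDelSets d gext) {j₀ : Fin (m+1)}
    (hα : α ∈ DelSet d (-(gext j₀))) :
    (Hpoly gext (1 : Matrix _ _ ℝ) μ).coeff α = muExt μ j₀ * (-(gext j₀)).coeff α := by
  rw [coeff_Hpoly_one]
  refine sum_eq_single j₀ (fun j _ hj => ?_) (by simp)
  rw [coeff_neg, coeff_eq_zero_of_mem_DelSet hsep hα hj, neg_zero, mul_zero]

lemma DelSet_Hpoly_one (hsep : DisjointDelSets d gext) (hμ : ∀ j, 0 < μ j) :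
    DelSet d (Hpoly gext (1 : Matrix _ _ ℝ) μ) = DelTot2 d gext := by
  ext α
  simp only [DelTot2, mem_biUnion, mem_univ, true_and]
  constructor
  · intro hα
    have hΩ := (mem_DelSet.1 hα).1
    obtain ⟨j, hj⟩ : ∃ j, (-(gext j)).coeff α ≠ 0 := by
      by_contra! h
      exact (mem_OmegaSet.1 hΩ).1 (by simp [coeff_Hpoly_one, h])
    exact ⟨j, hsep.1 j ▸ mem_OmegaSet_of_coeff_ne_zero hΩ hj⟩
  · rintro ⟨j₀, hα⟩
    have hμ₀ := muExt_pos hμ j₀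
    have hcoeff := coeff_Hpoly_one_of_mem_DelSet (μ := μ) hsep hα
    obtain ⟨hΩ, hsq⟩ := mem_DelSet.1 hα
    refine mem_DelSet.2 ⟨mem_OmegaSet_of_coeff_ne_zero hΩ ?_, ?_⟩
    · rw [hcoeff]
      exact mul_ne_zero hμ₀.ne' (mem_OmegaSet.1 hΩ).1
    · rwa [hcoeff, ← C_mul_monomial, isSquare_C_mul_iff hμ₀]

lemma max_Hplus_Hminus_one (hsep : DisjointDelSets d gext) (hμ : ∀ j, 0 < μ j)
    (hα : α ∈ DelTot2 d gext) :
    max (Hplus gext (1 : Matrix _ _ ℝ) μ α) (Hminus gext (1 : Matrix _ _ ℝ) μ α) =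
      |(Hpoly gext (1 : Matrix _ _ ℝ) μ).coeff α| := by
  obtain ⟨j₀, -, hα⟩ := mem_biUnion.1 hα
  have hzero : ∀ j ∈ univ, j ≠ j₀ → (gext j).coeff α = 0 :=
    fun j _ hj => coeff_eq_zero_of_mem_DelSet hsep hα hj
  have hμ₀ := muExt_pos hμ j₀
  unfold Hplus Hminus
  rw [sum_eq_single j₀ (fun j hj hne => by simp [hzero j hj hne]) (by simp),
    sum_eq_single j₀ (fun j hj hne => by simp [hzero j hj hne]) (by simp),
    coeff_Hpoly_one_of_mem_DelSet hsep hα, hpoly_one, coeff_neg]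
  rcases lt_trichotomy ((gext j₀).coeff α) 0 with ha | ha | ha
  · rw [if_pos ha, if_neg ha.not_gt, abs_of_pos (by nlinarith), max_eq_left (by nlinarith)]
    ring
  · simp [ha]
  · rw [if_neg ha.not_gt, if_pos ha, abs_of_neg (by nlinarith), max_eq_right (by nlinarith)]
    ring

end DisjointSupports

section ProgramLw

variable {n d : ℕ}

/-- The summand of the objectives `v` of (lw) and `t` of (lw2) at `α`, where `a` stands for
`(p_α/d)^d`, respectively `(w_α/d)^d`. -/
def lwTerm (d : ℕ) (α : Fin n →₀ ℕ) (a : ℝ) (zα : Fin n → ℝ) : ℝ :=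
  ((d : ℝ) - (adeg α : ℝ)) *
    ((a * ∏ i, ((α i : ℝ) / zα i) ^ (α i)) ^ ((1 : ℝ) / ((d : ℝ) - (adeg α : ℝ))))

lemma lwTerm_mono {α : Fin n →₀ ℕ} {a b : ℝ} {zα : Fin n → ℝ} (hα : adeg α ≤ d)
    (hz : ∀ i, 0 ≤ zα i) (ha : 0 ≤ a) (hab : a ≤ b) : lwTerm d α a zα ≤ lwTerm d α b zα := by
  have hd : (0 : ℝ) ≤ d - adeg α := sub_nonneg.2 (by exact_mod_cast hα)
  have hP : 0 ≤ ∏ i, ((α i : ℝ) / zα i) ^ (α i) :=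
    prod_nonneg fun i _ => pow_nonneg (div_nonneg (Nat.cast_nonneg _) (hz i)) _
  exact mul_le_mul_of_nonneg_left (Real.rpow_le_rpow (mul_nonneg ha hP)
    (mul_le_mul_of_nonneg_right hab hP) (by positivity)) hd

lemma prod_mul_div_pow (α : Fin n →₀ ℕ) (θ : ℝ) (zα : Fin n → ℝ) :
    ∏ i, (θ * zα i / (α i : ℝ)) ^ (α i) = θ ^ adeg α * ∏ i, (zα i / (α i : ℝ)) ^ (α i) := by
  simp only [adeg, mul_div_assoc, mul_pow, prod_mul_distrib, prod_pow_eq_pow_sum]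

/-- The equality constraints of (lw) may be relaxed to `≥`: shrinking `z_α` for `|α| = d` by a
factor `θ ∈ (0,1]` restores equality, and these `α` do not enter the objective. -/
lemma exists_lwFeas_lwObj_eq_of_le (hde : Even d) (hd : d ≠ 0) {p : MvPolynomial (Fin n) ℝ}
    {z : (Fin n →₀ ℕ) → Fin n → ℝ}
    (hz : ∀ α ∈ DelSet d p, ∀ i, 0 ≤ z α i ∧ (z α i = 0 ↔ α i = 0))
    (hsum : ∀ i, ∑ α ∈ DelSet d p, z α i ≤ p.coeff (Finsupp.single i d))
    (hprod : ∀ α ∈ DelSet d p, adeg α = d →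
      (p.coeff α / (d : ℝ)) ^ d ≤ ∏ i, (z α i / (α i : ℝ)) ^ (α i)) :
    ∃ z', LwFeas d p z' ∧ lwObj d p z' = lwObj d p z := by
  classical
  have hscale : ∀ α, α ∈ DelSet d p ∧ adeg α = d → ∃ θ : ℝ, 0 < θ ∧ θ ≤ 1 ∧
      θ ^ d * ∏ i, (z α i / (α i : ℝ)) ^ (α i) = (p.coeff α / (d : ℝ)) ^ d :=
    fun α ⟨hα, hdeg⟩ => exists_pos_le_one_pow_mul_eq hd
      (hde.pow_pos (div_ne_zero (coeff_ne_zero_of_mem_DelSet hα) (by exact_mod_cast hd)))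
      (hprod α hα hdeg)
  choose! θ hθ using hscale
  set s : (Fin n →₀ ℕ) → ℝ := fun α => if α ∈ DelSet d p ∧ adeg α = d then θ α else 1
  have hs : ∀ α, 0 < s α ∧ s α ≤ 1 := fun α => by
    by_cases h : α ∈ DelSet d p ∧ adeg α = d
    · simp only [s, if_pos h]; exact ⟨(hθ α h).1, (hθ α h).2.1⟩
    · simp [s, if_neg h]
  refine ⟨fun α i => s α * z α i, ⟨fun α hα i => ?_, fun i => ?_, fun α hα hdeg => ?_⟩, ?_⟩
  · exact ⟨mul_nonneg (hs α).1.le (hz α hα i).1, by simp [(hs α).1.ne', (hz α hα i).2]⟩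
  · exact (sum_le_sum fun α hα => mul_le_of_le_one_left (hz α hα i).1 (hs α).2).trans (hsum i)
  · simp only [s, if_pos (And.intro hα hdeg)]
    rw [prod_mul_div_pow, hdeg]
    exact (hθ α ⟨hα, hdeg⟩).2.2
  · refine sum_congr rfl fun α hα => ?_
    have h : ¬ (α ∈ DelSet d p ∧ adeg α = d) := fun h => (mem_pfilter.1 hα).2.ne h.2
    simp [s, if_neg h]

end ProgramLw

section Transfer

variable {n m d : ℕ} {gext : Fin (m+1) → MvPolynomial (Fin n) ℝ} {μ : Fin m → ℝ}
  {z : (Fin n →₀ ℕ) → Fin n → ℝ}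

lemma exists_lwFeas_add_lwObj_le_lw2Obj (hde : Even d) (hd : d ≠ 0)
    (hsep : DisjointDelSets d gext) {w : (Fin n →₀ ℕ) → ℝ}
    (h : Lw2Feas d gext (1 : Matrix _ _ ℝ) z w μ) :
    ∃ z', LwFeas d (Hpoly gext (1 : Matrix _ _ ℝ) μ) z' ∧
      ∑ j, μ j * max (eval 0 (hpoly gext (1 : Matrix _ _ ℝ) j.succ)) 0 +
          lwObj d (Hpoly gext (1 : Matrix _ _ ℝ) μ) z' ≤
        lw2Obj d gext (1 : Matrix _ _ ℝ) z w μ := by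
  obtain ⟨hμ, hz, -, hsum, hprod, hw, -⟩ := h
  have hΔ := DelSet_Hpoly_one hsep hμ
  have hcw : ∀ α ∈ DelTot2 d gext,
      ((Hpoly gext (1 : Matrix _ _ ℝ) μ).coeff α / (d : ℝ)) ^ d ≤ (w α / (d : ℝ)) ^ d :=
    fun α hα => div_pow_le_div_pow_of_abs_le hde (Nat.cast_nonneg d)
      ((max_Hplus_Hminus_one hsep hμ hα).symm.trans_le (hw α hα))
  rw [← hΔ] at hz hsum hprod hcw
  obtain ⟨z', hz', hobj⟩ := exists_lwFeas_lwObj_eq_of_le hde hd hz hsum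
    fun α hα hdeg => (hcw α hα).trans (hprod α hα hdeg)
  refine ⟨z', hz', ?_⟩
  unfold lw2Obj
  refine add_le_add le_rfl ?_
  rw [hobj, lwObj, ← hΔ]
  refine sum_le_sum fun α hα => ?_
  obtain ⟨hα, hdeg⟩ := mem_pfilter.1 hα
  exact lwTerm_mono hdeg.le (fun i => (hz α hα i).1) (hde.pow_nonneg _) (hcw α hα)

lemma lw2Feas_abs_coeff (hde : Even d) (hsep : DisjointDelSets d gext) (hμ : ∀ j, 0 < μ j)
    (hz : LwFeas d (Hpoly gext (1 : Matrix _ _ ℝ) μ) z) :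
    Lw2Feas d gext (1 : Matrix _ _ ℝ) z
      (fun α => |(Hpoly gext (1 : Matrix _ _ ℝ) μ).coeff α|) μ := by
  have hΔ := DelSet_Hpoly_one hsep hμ
  obtain ⟨hsign, hsum, hprod⟩ := hz
  refine ⟨hμ, hΔ ▸ hsign, fun α hα => abs_pos.2 (coeff_ne_zero_of_mem_DelSet (hΔ ▸ hα)),
    hΔ ▸ hsum, fun α hα hdeg => ?_, fun α hα => (max_Hplus_Hminus_one hsep hμ hα).le,
    fun j _ => ?_⟩
  · rw [div_pow, hde.pow_abs, ← div_pow, hprod α (hΔ ▸ hα) hdeg]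
  · simpa [Matrix.one_apply] using (muExt_pos hμ j).le

lemma lw2Obj_abs_coeff (hde : Even d) (hsep : DisjointDelSets d gext) (hμ : ∀ j, 0 < μ j) :
    lw2Obj d gext (1 : Matrix _ _ ℝ) z
        (fun α => |(Hpoly gext (1 : Matrix _ _ ℝ) μ).coeff α|) μ =
      ∑ j, μ j * max (eval 0 (hpoly gext (1 : Matrix _ _ ℝ) j.succ)) 0 +
        lwObj d (Hpoly gext (1 : Matrix _ _ ℝ) μ) z := by
  unfold lw2Obj lwObj
  rw [DelSet_Hpoly_one hsep hμ]
  simp only [div_pow, hde.pow_abs]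

end Transfer

theorem fAgp_one_eq_sSup_lwGp_Hpoly {n m d : ℕ} (hde : Even d) (hd : d ≠ 0)
    {gext : Fin (m+1) → MvPolynomial (Fin n) ℝ} (hsep : DisjointDelSets d gext)
    (hg0 : ∀ k : Fin (m+1), k ≠ 0 → 0 ≤ eval (0 : Fin n → ℝ) (gext k)) :
    fAgp d gext (1 : Matrix _ _ ℝ) =
      sSup ((fun μ => lwGp d (Hpoly gext (1 : Matrix _ _ ℝ) μ)) '' {μ | ∀ j, 0 < μ j}) := by
  apply le_antisymm
  · unfold fAgp rhoA
    refine EReal.coe_sub_sInf_image_le ?_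
    rintro ⟨z, w, μ⟩ (h : Lw2Feas d gext (1 : Matrix _ _ ℝ) z w μ)
    obtain ⟨z', hz', hle⟩ := exists_lwFeas_add_lwObj_le_lw2Obj hde hd hsep h
    calc ((-eval 0 (hpoly gext (1 : Matrix _ _ ℝ) 0) -
            lw2Obj d gext (1 : Matrix _ _ ℝ) z w μ : ℝ) : EReal)
        ≤ ((eval 0 (Hpoly gext (1 : Matrix _ _ ℝ) μ) -
            lwObj d (Hpoly gext (1 : Matrix _ _ ℝ) μ) z' : ℝ) : EReal) := by
          rw [eval_zero_Hpoly_one gext μ hg0, EReal.coe_le_coe_iff]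
          linarith
      _ ≤ lwGp d (Hpoly gext (1 : Matrix _ _ ℝ) μ) :=
          EReal.coe_sub_le_coe_sub_sInf ⟨z', hz', rfl⟩
      _ ≤ _ := le_sSup <| by exact ⟨μ, h.1, rfl⟩
  · refine sSup_le ?_
    rintro _ ⟨μ, hμ, rfl⟩
    refine EReal.coe_sub_sInf_image_le fun z hz => ?_
    calc ((eval 0 (Hpoly gext (1 : Matrix _ _ ℝ) μ) -
            lwObj d (Hpoly gext (1 : Matrix _ _ ℝ) μ) z : ℝ) : EReal)
        = ((-eval 0 (hpoly gext (1 : Matrix _ _ ℝ) 0) - lw2Obj d gext (1 : Matrix _ _ ℝ) z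
            (fun α => |(Hpoly gext (1 : Matrix _ _ ℝ) μ).coeff α|) μ : ℝ) : EReal) := by
          rw [lw2Obj_abs_coeff hde hsep hμ, eval_zero_Hpoly_one gext μ hg0]
          congr 1
          ring
      _ ≤ fAgp d gext (1 : Matrix _ _ ℝ) := by
          unfold fAgp rhoA
          exact EReal.coe_sub_le_coe_sub_sInf
            ⟨(z, _, μ), lw2Feas_abs_coeff hde hsep hμ hz, rfl⟩

theorem stmt13_general {n m : ℕ} (d : ℕ)
    (f : MvPolynomial (Fin n) ℝ) (g : Fin m → MvPolynomial (Fin n) ℝ)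
    (hd2 : 2 ≤ d) (hde : Even d)
    (gext : Fin (m+1) → MvPolynomial (Fin n) ℝ) (hgext : gext = Fin.cons (-f) g)
    (hO : ∀ j, OmegaSet d (-(gext j)) = DelSet d (-(gext j)))
    (A : Fin (m+1) → Fin (m+1) → ℝ) (hA : A = fun j k => if j = k then 1 else 0)
    (hdisj : ∀ j k : Fin (m+1), j < k →
      DelSet d (-(gext j)) ∩ DelSet d (-(gext k)) = ∅)
    (hg0 : ∀ k : Fin (m+1), k ≠ 0 → 0 ≤ eval (0 : Fin n → ℝ) (gext k)) :
    fAgp d gext A =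
      sSup ((fun lam => lwGp d (polyG f g lam)) '' {lam : Fin m → ℝ | ∀ j, 0 < lam j}) := by
  obtain rfl : A = (1 : Matrix _ _ ℝ) := by subst hA; rfl
  rw [fAgp_one_eq_sSup_lwGp_Hpoly hde (by omega) ⟨hO, hdisj⟩ hg0, hgext]
  simp_rw [Hpoly_one_cons_neg]

/-- Theorem (A = I, part 3): under (†), if moreover `Δ(−g_j) ∩ Δ(−g_k) = ∅` for `j < k` and
`g_k(0) ≥ 0` for `k = 1,…,m`, then `f^I_{gp,g} = s₀(f,g)`. -/
theorem stmt13 {n m : ℕ} (hn : 1 ≤ n) (d : ℕ)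
    (f : MvPolynomial (Fin n) ℝ) (g : Fin m → MvPolynomial (Fin n) ℝ)
    (hd2 : 2 ≤ d) (hde : Even d) (hdf : f.totalDegree ≤ d)
    (hdg : ∀ j, (g j).totalDegree ≤ d)
    (hdLeast : ∀ d' : ℕ, Even d' → 2 ≤ d' → f.totalDegree ≤ d' →
      (∀ j, (g j).totalDegree ≤ d') → d ≤ d')
    (gext : Fin (m+1) → MvPolynomial (Fin n) ℝ) (hgext : gext = Fin.cons (-f) g)
    (hO : ∀ j, OmegaSet d (-(gext j)) = DelSet d (-(gext j)))
    (hdagger : ∀ i : Fin n, ∃! k : Fin (m+1),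
      (gext k).coeff (Finsupp.single i d) < 0)
    (A : Fin (m+1) → Fin (m+1) → ℝ) (hA : A = fun j k => if j = k then 1 else 0)
    (hdisj : ∀ j k : Fin (m+1), j < k →
      DelSet d (-(gext j)) ∩ DelSet d (-(gext k)) = ∅)
    (hg0 : ∀ k : Fin (m+1), k ≠ 0 → 0 ≤ eval (0 : Fin n → ℝ) (gext k)) :
    fAgp d gext A =
      sSup ((fun lam => lwGp d (polyG f g lam)) '' {lam : Fin m → ℝ | ∀ j, 0 < lam j}) :=
  stmt13_general d f g hd2 hde gext hgext hO A hA hdisj hg0
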